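/- For every a ∈ (0,1), every 2×2 unitary matrix U and every c ∈ (−1,1), there exists a holomorphic map F : 𝔹₂ → 𝔻 such that F(φ_{a,U,c}(λ)) = λ·m_γ(λ) for all λ ∈ 𝔻, where γ = 2c/(1+c²). -/

import Mathlib

open Metric Set Complex

noncomputable section

/-- `ℂⁿ` with the Euclidean norm; `𝔹ₙ` is `Metric.ball 0 1` in this space. -/
abbrev En (n : ℕ) := EuclideanSpace ℂ (Fin n)

/-- The Möbius map `m_a` interchanging `0` and `a`. -/
def mob (a z : ℂ) : ℂ := (a - z) / (1 - (starRingEnd ℂ) a * z)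

/-- A Blaschke product of degree `k`: `z ↦ η * ∏ j, m_{α j}(z)` with `|η| = 1`, `α j ∈ 𝔻`. -/
def IsBlaschke (k : ℕ) (B : ℂ → ℂ) : Prop :=
  ∃ η : ℂ, ‖η‖ = 1 ∧ ∃ α : Fin k → ℂ, (∀ j, α j ∈ ball (0 : ℂ) 1) ∧
    ∀ z : ℂ, B z = η * ∏ j, mob (α j) z

/-- The Pick problem `𝔹ₙ → 𝔻`, `z j ↦ lam j`, is extremal: it is solvable by a holomorphic
map `𝔹ₙ → 𝔻`, but by no holomorphic solution with `sup_{𝔹ₙ} |G| < 1`. -/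
def ExtremalPick {n : ℕ} {ι : Type} (z : ι → En n) (lam : ι → ℂ) : Prop :=
  (∃ F : En n → ℂ, DifferentiableOn ℂ F (ball 0 1) ∧
      MapsTo F (ball (0 : En n) 1) (ball (0 : ℂ) 1) ∧ ∀ j, F (z j) = lam j) ∧
  ¬ ∃ G : En n → ℂ, DifferentiableOn ℂ G (ball 0 1) ∧ (∀ j, G (z j) = lam j) ∧
      ∃ r : ℝ, r < 1 ∧ ∀ x ∈ ball (0 : En n) 1, ‖G x‖ ≤ r

/-- An extremal 3-point Pick problem is non-degenerate if no 2-point subproblem is extremal. -/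
def ExtremalPick3Nondeg {n : ℕ} (z : Fin 3 → En n) (lam : Fin 3 → ℂ) : Prop :=
  ExtremalPick z lam ∧
    ∀ i j : Fin 3, i ≠ j → ¬ ExtremalPick ![z i, z j] ![lam i, lam j]

/-- The Hermitian product `⟨z,w⟩ = z₁·conj w₁ + z₂·conj w₂`. -/
def herm (z w : En 2) : ℂ :=
  z 0 * (starRingEnd ℂ) (w 0) + z 1 * (starRingEnd ℂ) (w 1)

/-- Orthogonal projection `P_w z = (⟨z,w⟩/‖w‖²)·w`. -/
def projW (w z : En 2) : En 2 := (herm z w / ((‖w‖ : ℂ) ^ 2)) • w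

open scoped Classical in
/-- The involutive automorphism `χ_w` of `𝔹₂` interchanging `0` and `w` (`χ_0 = id`). -/
def chiW (w z : En 2) : En 2 :=
  if w = 0 then z
  else (1 / (1 - herm z w)) •
    (w - projW w z - ((Real.sqrt (1 - ‖w‖ ^ 2) : ℝ) : ℂ) • (z - projW w z))

/-- The point `γ = 2c/(1 + c²)` as a complex number. -/
def gamc (c : ℝ) : ℂ := ((2 * c / (1 + c ^ 2) : ℝ) : ℂ)

/-- The map `φ_{a,U,c}(λ) = χ_w(U(a·m_c(λ), b·m_c(λ)²))`, `b = √(1−a²)`, `w = U(ac, bc²)`. -/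
def phiAUc (a : ℝ) (U : Matrix (Fin 2) (Fin 2) ℂ) (c : ℝ) (lam : ℂ) : En 2 :=
  chiW (WithLp.toLp 2 (U.mulVec ![(a : ℂ) * c, ((Real.sqrt (1 - a ^ 2) : ℝ) : ℂ) * (c : ℂ) ^ 2]))
    (WithLp.toLp 2 (U.mulVec ![(a : ℂ) * mob (c : ℂ) lam,
      ((Real.sqrt (1 - a ^ 2) : ℝ) : ℂ) * (mob (c : ℂ) lam) ^ 2]))

open scoped InnerProductSpace ComplexConjugate Matrix

/-!
Since `χ_w` is an involution of `𝔹₂`, `χ_w (φ(λ)) = U (a μ, b μ²)` with `μ = m_c(λ)`. Undoing `U`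
and applying `y ↦ (y₁² + 2b y₂) / (1 + b²)`, which maps `𝔹₂` into `𝔻` and sends `(a μ, b μ²)` to
`μ²` because `a² + b² = 1`, recovers `μ²`. Finally `m_{c²}(m_c(λ)²) = λ m_γ(λ)`, so
`F = m_{c²} ∘ (y ↦ (y₁² + 2b y₂) / (1 + b²)) ∘ U* ∘ χ_w` works.
-/

lemma one_sub_ne_zero_of_norm_lt_one {R : Type*} [NormedRing R] [NormOneClass R] {p : R}
    (hp : ‖p‖ < 1) : 1 - p ≠ 0 := by
  rw [sub_ne_zero]; rintro rfl; simp at hp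

lemma ofReal_sqrt_one_sub_sq_sq {r : ℝ} (hr : r ^ 2 ≤ 1) :
    (√(1 - r ^ 2) : ℂ) ^ 2 = 1 - (r : ℂ) ^ 2 := by
  norm_cast; rw [Real.sq_sqrt (by linarith)]

lemma one_add_ofReal_sqrt_ne_zero (x : ℝ) : 1 + (√x : ℂ) ≠ 0 := by
  norm_cast; positivity

section BallInvolution

variable {E : Type*} [NormedAddCommGroup E] [InnerProductSpace ℂ E]

/-- `χ_w` written without the projection `P_w`. It agrees with `chiW w` for `w ≠ 0`, but
`ballInvolution 0 = -id` while `chiW 0 = id`. -/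
def ballInvolution (w z : E) : E :=
  (1 - ⟪w, z⟫_ℂ)⁻¹ •
    ((1 - ⟪w, z⟫_ℂ / (1 + (√(1 - ‖w‖ ^ 2) : ℂ))) • w - (√(1 - ‖w‖ ^ 2) : ℂ) • z)

lemma norm_inner_lt_one {w z : E} (hw : ‖w‖ < 1) (hz : ‖z‖ < 1) : ‖⟪w, z⟫_ℂ‖ < 1 :=
  (norm_inner_le_norm w z).trans_lt (by nlinarith [norm_nonneg w, norm_nonneg z])

lemma one_sub_inner_ne_zero {w z : E} (hw : ‖w‖ < 1) (hz : ‖z‖ < 1) : 1 - ⟪w, z⟫_ℂ ≠ 0 :=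
  one_sub_ne_zero_of_norm_lt_one (norm_inner_lt_one hw hz)

lemma one_sub_inner_ballInvolution {w : E} (hw : ‖w‖ ≤ 1) {z : E} (hz : 1 - ⟪w, z⟫_ℂ ≠ 0) :
    1 - ⟪w, ballInvolution w z⟫_ℂ = (√(1 - ‖w‖ ^ 2) : ℂ) ^ 2 / (1 - ⟪w, z⟫_ℂ) := by
  have hs := ofReal_sqrt_one_sub_sq_sq (by nlinarith [norm_nonneg w] : ‖w‖ ^ 2 ≤ 1)
  have hs1 := one_add_ofReal_sqrt_ne_zero (1 - ‖w‖ ^ 2)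
  simp only [ballInvolution, inner_smul_right, inner_sub_right, inner_self_eq_norm_sq_to_K]
  field_simp
  linear_combination (⟪w, z⟫_ℂ - 1 - (√(1 - ‖w‖ ^ 2) : ℂ)) * hs

lemma ballInvolution_ballInvolution {w : E} (hw : ‖w‖ < 1) {z : E} (hz : 1 - ⟪w, z⟫_ℂ ≠ 0) :
    ballInvolution w (ballInvolution w z) = z := by
  have hs0 : (√(1 - ‖w‖ ^ 2) : ℂ) ≠ 0 := by
    norm_cast; exact (Real.sqrt_pos.2 (by nlinarith [norm_nonneg w])).ne'
  have hs1 := one_add_ofReal_sqrt_ne_zero (1 - ‖w‖ ^ 2)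
  have hp : ⟪w, ballInvolution w z⟫_ℂ = 1 - (√(1 - ‖w‖ ^ 2) : ℂ) ^ 2 / (1 - ⟪w, z⟫_ℂ) := by
    rw [← one_sub_inner_ballInvolution hw.le hz, sub_sub_cancel]
  conv_lhs => rw [ballInvolution, hp, sub_sub_cancel]; unfold ballInvolution
  match_scalars
  · field_simp
    ring
  · field_simp

lemma norm_sq_one_sub_inner_mul_one_sub_norm_sq_ballInvolution {w : E} (hw : ‖w‖ ≤ 1) {z : E}
    (hz : 1 - ⟪w, z⟫_ℂ ≠ 0) :
    ‖1 - ⟪w, z⟫_ℂ‖ ^ 2 * (1 - ‖ballInvolution w z‖ ^ 2) = (1 - ‖w‖ ^ 2) * (1 - ‖z‖ ^ 2) := by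
  have hX : (1 - ⟪w, z⟫_ℂ) • ballInvolution w z =
      (1 - ⟪w, z⟫_ℂ / (1 + (√(1 - ‖w‖ ^ 2) : ℂ))) • w - (√(1 - ‖w‖ ^ 2) : ℂ) • z := by
    rw [ballInvolution, smul_inv_smul₀ hz]
  rw [mul_sub, mul_one, ← mul_pow, ← norm_smul (1 - ⟪w, z⟫_ℂ) (ballInvolution w z), hX,
    norm_sub_sq (𝕜 := ℂ) (_ • w), norm_smul, norm_smul, inner_smul_left, inner_smul_right]
  have hs : √(1 - ‖w‖ ^ 2) ^ 2 = 1 - ‖w‖ ^ 2 := Real.sq_sqrt (by nlinarith [norm_nonneg w])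
  have hs0 : 0 ≤ √(1 - ‖w‖ ^ 2) := Real.sqrt_nonneg _
  generalize √(1 - ‖w‖ ^ 2) = s at *
  generalize ⟪w, z⟫_ℂ = p at *
  have hs1 : (1 + s : ℂ) ≠ 0 := by norm_cast; positivity
  -- with `p = (1 + s) q` the identity becomes polynomial in `re q`, `im q`, `s`, `‖w‖`, `‖z‖`
  obtain ⟨q, rfl⟩ : ∃ q, p = (1 + s) * q := ⟨p / (1 + s), by field_simp⟩
  rw [mul_div_cancel_left₀ _ hs1, Complex.norm_real, Real.norm_of_nonneg hs0]
  simp only [RCLike.re_to_complex, mul_pow, Complex.sq_norm, Complex.normSq_apply,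
    Complex.mul_re, Complex.mul_im, Complex.sub_re, Complex.sub_im, Complex.one_re,
    Complex.one_im, Complex.add_re, Complex.add_im, Complex.ofReal_re, Complex.ofReal_im,
    Complex.conj_re, Complex.conj_im]
  linear_combination (1 - ‖z‖ ^ 2 - (1 - q.re) ^ 2 - q.im ^ 2) * hs

lemma norm_ballInvolution_lt_one {w z : E} (hw : ‖w‖ < 1) (hz : ‖z‖ < 1) :
    ‖ballInvolution w z‖ < 1 := by
  have hp := one_sub_inner_ne_zero hw hz
  have key := norm_sq_one_sub_inner_mul_one_sub_norm_sq_ballInvolution hw.le hp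
  have hpos : 0 < (1 - ‖w‖ ^ 2) * (1 - ‖z‖ ^ 2) := by
    apply mul_pos <;> nlinarith [norm_nonneg w, norm_nonneg z]
  rw [← key] at hpos
  have := (pos_of_mul_pos_right hpos (by positivity) : 0 < 1 - ‖ballInvolution w z‖ ^ 2)
  nlinarith [norm_nonneg (ballInvolution w z)]

lemma differentiableOn_ballInvolution (w : E) :
    DifferentiableOn ℂ (ballInvolution w) {z | 1 - ⟪w, z⟫_ℂ ≠ 0} := by
  have hp : Differentiable ℂ fun z => ⟪w, z⟫_ℂ := (innerSL ℂ w).differentiable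
  intro z hz
  unfold ballInvolution
  apply DifferentiableAt.differentiableWithinAt
  fun_prop (disch := exact hz)

end BallInvolution

lemma herm_eq_inner (z w : En 2) : herm z w = ⟪w, z⟫_ℂ := by
  simp [herm, PiLp.inner_apply, Fin.sum_univ_two]

lemma chiW_eq_ballInvolution {w : En 2} (hw0 : w ≠ 0) (hw : ‖w‖ ≤ 1) :
    chiW w = ballInvolution w := by
  funext z
  have hs := ofReal_sqrt_one_sub_sq_sq (by nlinarith [norm_nonneg w] : ‖w‖ ^ 2 ≤ 1)
  have hs1 := one_add_ofReal_sqrt_ne_zero (1 - ‖w‖ ^ 2)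
  have hr : (‖w‖ : ℂ) ≠ 0 := by exact_mod_cast norm_ne_zero_iff.2 hw0
  rw [chiW, if_neg hw0, ballInvolution, projW, herm_eq_inner, one_div]
  congr 1
  match_scalars
  · field_simp
    linear_combination ⟪w, z⟫_ℂ * hs
  · ring

lemma chiW_chiW {w z : En 2} (hw : ‖w‖ < 1) (hz : ‖z‖ < 1) : chiW w (chiW w z) = z := by
  rcases eq_or_ne w 0 with rfl | hw0
  · simp [chiW]
  · rw [chiW_eq_ballInvolution hw0 hw.le]
    exact ballInvolution_ballInvolution hw (one_sub_inner_ne_zero hw hz)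

lemma mapsTo_chiW {w : En 2} (hw : ‖w‖ < 1) : MapsTo (chiW w) (ball 0 1) (ball 0 1) := by
  intro z hz
  rw [mem_ball_zero_iff] at hz ⊢
  rcases eq_or_ne w 0 with rfl | hw0
  · simpa [chiW] using hz
  · rw [chiW_eq_ballInvolution hw0 hw.le]
    exact norm_ballInvolution_lt_one hw hz

lemma differentiableOn_chiW {w : En 2} (hw : ‖w‖ < 1) :
    DifferentiableOn ℂ (chiW w) (ball 0 1) := by
  rcases eq_or_ne w 0 with rfl | hw0
  · exact differentiableOn_id.congr fun z _ => if_pos rfl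
  · rw [chiW_eq_ballInvolution hw0 hw.le]
    exact (differentiableOn_ballInvolution w).mono fun z hz =>
      one_sub_inner_ne_zero hw (mem_ball_zero_iff.1 hz)

lemma norm_toEuclideanCLM_of_mem_unitaryGroup {n : Type*} [Fintype n] [DecidableEq n]
    {U : Matrix n n ℂ} (hU : U ∈ Matrix.unitaryGroup n ℂ) (x : EuclideanSpace ℂ n) :
    ‖Matrix.toEuclideanCLM (𝕜 := ℂ) U x‖ = ‖x‖ := by
  refine ContinuousLinearMap.norm_map_of_mem_unitary ?_ x
  rw [Unitary.mem_iff, ← map_star, ← map_mul, ← map_mul, Unitary.star_mul_self_of_mem hU,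
    Unitary.mul_star_self_of_mem hU, map_one, and_self]

lemma norm_sq_one_sub_conj_mul_sub_norm_sq_sub (α z : ℂ) :
    ‖1 - conj α * z‖ ^ 2 - ‖α - z‖ ^ 2 = (1 - ‖α‖ ^ 2) * (1 - ‖z‖ ^ 2) := by
  simp only [Complex.sq_norm, Complex.normSq_apply, Complex.sub_re, Complex.sub_im,
    Complex.mul_re, Complex.mul_im, Complex.conj_re, Complex.conj_im, Complex.one_re,
    Complex.one_im]
  ring

lemma one_sub_conj_mul_ne_zero {α z : ℂ} (hα : ‖α‖ < 1) (hz : ‖z‖ < 1) :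
    1 - conj α * z ≠ 0 := by
  refine one_sub_ne_zero_of_norm_lt_one ?_
  rw [norm_mul, Complex.norm_conj]
  nlinarith [norm_nonneg α, norm_nonneg z]

lemma norm_mob_lt_one {α z : ℂ} (hα : ‖α‖ < 1) (hz : ‖z‖ < 1) : ‖mob α z‖ < 1 := by
  have hd := one_sub_conj_mul_ne_zero hα hz
  have key := norm_sq_one_sub_conj_mul_sub_norm_sq_sub α z
  rw [mob, norm_div, div_lt_one (norm_pos_iff.2 hd)]
  have : 0 < (1 - ‖α‖ ^ 2) * (1 - ‖z‖ ^ 2) := by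
    apply mul_pos <;> nlinarith [norm_nonneg α, norm_nonneg z]
  nlinarith [norm_nonneg (α - z), norm_nonneg (1 - conj α * z)]

lemma differentiableOn_mob {α : ℂ} (hα : ‖α‖ < 1) : DifferentiableOn ℂ (mob α) (ball 0 1) := by
  intro z hz
  rw [mem_ball_zero_iff] at hz
  unfold mob
  apply DifferentiableAt.differentiableWithinAt
  fun_prop (disch := exact one_sub_conj_mul_ne_zero hα hz)

-- `m_c(λ)² = c²` exactly at `λ = 0` and `λ = m_c(-c) = γ`: both sides are the Blaschke product
-- with zeros `0` and `γ`.
lemma mob_sq_mob {c : ℝ} (hc : |c| < 1) {z : ℂ} (hz : ‖z‖ < 1) :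
    mob ((c ^ 2 : ℝ) : ℂ) (mob c z ^ 2) = z * mob (gamc c) z := by
  have hc' : ‖(c : ℂ)‖ < 1 := by rwa [Complex.norm_real, Real.norm_eq_abs]
  have h1 : 1 - (c : ℂ) * z ≠ 0 := by
    simpa using one_sub_conj_mul_ne_zero hc' hz
  have hc2 : (1 + c ^ 2 : ℂ) ≠ 0 := by norm_cast; positivity
  have hγ : ‖gamc c‖ < 1 := by
    rw [gamc, Complex.norm_real, Real.norm_eq_abs, abs_div,
      abs_of_pos (by positivity : (0 : ℝ) < 1 + c ^ 2), div_lt_one (by positivity), abs_mul,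
      abs_two]
    nlinarith [sq_abs c, abs_nonneg c]
  have h2 : 1 + (c : ℂ) ^ 2 - c * z * 2 ≠ 0 := by
    have h := mul_ne_zero hc2 (one_sub_conj_mul_ne_zero hγ hz)
    convert h using 1
    simp only [gamc, Complex.conj_ofReal]
    push_cast
    field_simp
  have h3 : (1 - (c : ℂ) * z) ^ 2 - c ^ 2 * (c - z) ^ 2 ≠ 0 := by
    have h4 : (1 - (c : ℂ) ^ 2) ≠ 0 := by
      norm_cast; nlinarith [sq_abs c, abs_nonneg c]
    have : (1 - (c : ℂ) * z) ^ 2 - c ^ 2 * (c - z) ^ 2 =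
        (1 - c ^ 2) * (1 + c ^ 2 - c * z * 2) := by ring
    rw [this]; exact mul_ne_zero h4 h2
  simp only [mob, gamc, Complex.conj_ofReal]
  push_cast
  field_simp
  ring

lemma norm_sq_euclideanSpace_fin_two {𝕜 : Type*} [RCLike 𝕜] (y : EuclideanSpace 𝕜 (Fin 2)) :
    ‖y‖ ^ 2 = ‖y 0‖ ^ 2 + ‖y 1‖ ^ 2 := by
  rw [EuclideanSpace.norm_sq_eq, Fin.sum_univ_two]

def quadMap (b : ℝ) (y : En 2) : ℂ := (y 0 ^ 2 + 2 * b * y 1) / (1 + b ^ 2)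

def quadCurve (a : ℝ) (μ : ℂ) : Fin 2 → ℂ :=
  ![(a : ℂ) * μ, ((Real.sqrt (1 - a ^ 2) : ℝ) : ℂ) * μ ^ 2]

lemma differentiable_quadMap (b : ℝ) : Differentiable ℂ (quadMap b) := by
  have h0 := (EuclideanSpace.proj (0 : Fin 2) (𝕜 := ℂ)).differentiable
  have h1 := (EuclideanSpace.proj (1 : Fin 2) (𝕜 := ℂ)).differentiable
  unfold quadMap
  fun_prop

lemma norm_quadMap_lt_one (b : ℝ) {y : En 2} (hy : ‖y‖ < 1) : ‖quadMap b y‖ < 1 := by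
  have hy2 := norm_sq_euclideanSpace_fin_two y
  have hnum : ‖y 0 ^ 2 + 2 * b * y 1‖ ≤ ‖y 0‖ ^ 2 + 2 * |b| * ‖y 1‖ := by
    refine (norm_add_le _ _).trans_eq ?_
    rw [norm_pow, norm_mul, norm_mul, Complex.norm_real, Real.norm_eq_abs, Complex.norm_two]
  have hden : ‖(1 + b ^ 2 : ℂ)‖ = 1 + b ^ 2 := by
    rw [← Complex.ofReal_one, ← Complex.ofReal_pow, ← Complex.ofReal_add, Complex.norm_real,
      Real.norm_of_nonneg (by positivity)]
  rw [quadMap, norm_div, hden, div_lt_one (by positivity)]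
  nlinarith [sq_nonneg (‖y 1‖ - |b|), sq_abs b, norm_nonneg y]

lemma norm_quadCurve_lt_one {a : ℝ} (ha : a ^ 2 ≤ 1) {μ : ℂ} (hμ : ‖μ‖ < 1) :
    ‖WithLp.toLp 2 (quadCurve a μ)‖ < 1 := by
  rw [← sq_lt_one_iff₀ (norm_nonneg _), norm_sq_euclideanSpace_fin_two]
  simp only [quadCurve, Matrix.cons_val_zero, Matrix.cons_val_one, norm_mul, norm_pow,
    Complex.norm_real, Real.norm_eq_abs, mul_pow, sq_abs, Real.sq_sqrt (by linarith : 0 ≤ 1 - a ^ 2)]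
  have hμ2 : ‖μ‖ ^ 2 < 1 := by nlinarith [norm_nonneg μ]
  nlinarith [mul_nonneg (sub_nonneg.2 ha) (mul_nonneg (sq_nonneg ‖μ‖) (sub_nonneg.2 hμ2.le))]

lemma quadMap_quadCurve {a : ℝ} (ha : a ^ 2 ≤ 1) (μ : ℂ) :
    quadMap √(1 - a ^ 2) (WithLp.toLp 2 (quadCurve a μ)) = μ ^ 2 := by
  have hb := ofReal_sqrt_one_sub_sq_sq ha
  have hd : (1 + ((√(1 - a ^ 2) : ℝ) : ℂ) ^ 2) ≠ 0 := by norm_cast; positivity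
  simp only [quadMap, quadCurve, Matrix.cons_val_zero, Matrix.cons_val_one]
  field_simp
  linear_combination μ ^ 2 * hb

lemma exists_holomorphic_comp_chiW_quadCurve_eq_sq {a : ℝ} (ha : a ^ 2 ≤ 1)
    {U : Matrix (Fin 2) (Fin 2) ℂ} (hU : U ∈ Matrix.unitaryGroup (Fin 2) ℂ) {μ₀ : ℂ}
    (hμ₀ : ‖μ₀‖ < 1) :
    ∃ G : En 2 → ℂ, DifferentiableOn ℂ G (ball 0 1) ∧ MapsTo G (ball 0 1) (ball 0 1) ∧
      ∀ μ : ℂ, ‖μ‖ < 1 → G (chiW (WithLp.toLp 2 (U *ᵥ quadCurve a μ₀))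
        (WithLp.toLp 2 (U *ᵥ quadCurve a μ))) = μ ^ 2 := by
  set V := Matrix.toEuclideanCLM (𝕜 := ℂ) U
  set V' := Matrix.toEuclideanCLM (𝕜 := ℂ) (star U)
  have hV : ∀ y, ‖V y‖ = ‖y‖ := norm_toEuclideanCLM_of_mem_unitaryGroup hU
  have hV' : ∀ y, ‖V' y‖ = ‖y‖ := norm_toEuclideanCLM_of_mem_unitaryGroup (Unitary.star_mem hU)
  have hV'V : ∀ y, V' (V y) = y := fun y => by
    change (V' * V) y = y
    rw [← map_mul, Unitary.star_mul_self_of_mem hU, map_one]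
    rfl
  have hV_toLp : ∀ μ, WithLp.toLp 2 (U *ᵥ quadCurve a μ) = V (WithLp.toLp 2 (quadCurve a μ)) :=
    fun _ => rfl
  have hw : ‖V (WithLp.toLp 2 (quadCurve a μ₀))‖ < 1 := by
    rw [hV]; exact norm_quadCurve_lt_one ha hμ₀
  refine ⟨fun x => quadMap √(1 - a ^ 2) (V' (chiW (V (WithLp.toLp 2 (quadCurve a μ₀))) x)),
    (differentiable_quadMap _).comp_differentiableOn
      (V'.differentiable.comp_differentiableOn (differentiableOn_chiW hw)),
    fun x hx => ?_, fun μ hμ => ?_⟩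
  · have hχ := mem_ball_zero_iff.1 (mapsTo_chiW hw hx)
    exact mem_ball_zero_iff.2 (norm_quadMap_lt_one _ ((hV' _).trans_lt hχ))
  · have hz : ‖V (WithLp.toLp 2 (quadCurve a μ))‖ < 1 := by
      rw [hV]; exact norm_quadCurve_lt_one ha hμ
    simp only [hV_toLp, chiW_chiW hw hz, hV'V, quadMap_quadCurve ha]

/-- for `a ∈ (0,1)`, `U` unitary, `c ∈ (−1,1)`, there is a holomorphic
`F : 𝔹₂ → 𝔻` with `F(φ_{a,U,c}(λ)) = λ·m_γ(λ)` for all `λ ∈ 𝔻`, `γ = 2c/(1+c²)`. -/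
theorem stmt_11 (a : ℝ) (ha : a ∈ Ioo (0 : ℝ) 1)
    (U : Matrix (Fin 2) (Fin 2) ℂ) (hU : U ∈ Matrix.unitaryGroup (Fin 2) ℂ)
    (c : ℝ) (hc : c ∈ Ioo (-1 : ℝ) 1) :
    ∃ F : En 2 → ℂ, DifferentiableOn ℂ F (ball 0 1) ∧
      MapsTo F (ball (0 : En 2) 1) (ball (0 : ℂ) 1) ∧
      ∀ lam ∈ ball (0 : ℂ) 1, F (phiAUc a U c lam) = lam * mob (gamc c) lam := by
  have hc1 : ‖(c : ℂ)‖ < 1 := by rwa [Complex.norm_real, Real.norm_eq_abs, abs_lt]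
  have hc2 : ‖((c ^ 2 : ℝ) : ℂ)‖ < 1 := by
    rw [Complex.norm_real, Real.norm_eq_abs, abs_sq]
    nlinarith [mul_pos (sub_pos.2 hc.2) (neg_lt_iff_pos_add.1 hc.1)]
  obtain ⟨G, hGd, hGm, hG⟩ :=
    exists_holomorphic_comp_chiW_quadCurve_eq_sq (a := a) (by nlinarith [ha.1, ha.2]) hU hc1
  refine ⟨fun x => mob ((c ^ 2 : ℝ) : ℂ) (G x), (differentiableOn_mob hc2).comp hGd hGm,
    fun x hx => mem_ball_zero_iff.2 (norm_mob_lt_one hc2 (mem_ball_zero_iff.1 (hGm hx))),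
    fun lam hlam => ?_⟩
  have hlam' := mem_ball_zero_iff.1 hlam
  change mob _ (G (chiW (WithLp.toLp 2 (U *ᵥ quadCurve a c))
    (WithLp.toLp 2 (U *ᵥ quadCurve a (mob c lam))))) = _
  rw [hG _ (norm_mob_lt_one hc1 hlam'), mob_sq_mob (abs_lt.2 hc) hlam']
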